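/- arXiv:2312.08125 — 8 statements merged into one kernel-verified Lean document; each statement's English description precedes it below -/
import Mathlib

section
/- There exists ν₊ > 0 such that for every ν ∈ (0, ν₊] the set B_ν is forward invariant for the flow of F_ν: every solution z defined on [0, ∞) with z(0) ∈ B_ν satisfies z(t) ∈ B_ν for all t ≥ 0. -/
/-!
Write the box as the sublevel set `{x² ≤ 2ν, y² ≤ ν²}`. On its faces the field points strictly
inward: where `x² = 2ν` one has `x ẋ = 2ν (-ν + 2ν y + y²) ≤ 2ν² (3ν - 1) < 0`, and where
`y² = ν²` one has `y ẏ = -ν² + x² y² + x⁴ y ≤ ν² (6ν - 1) < 0`. So a solution lying in the box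
at time `t` stays in it on a right neighbourhood of `t`, and continuous induction on `[0, T]`
keeps it there forever.
-/

open Set

/-- The planar vector field `F_ν(x, y) = (x(ν − x²) + x³y + xy², −y + x²y + x⁴)`. -/
noncomputable def F (ν : ℝ) (p : ℝ × ℝ) : ℝ × ℝ :=
  (p.1 * (ν - p.1 ^ 2) + p.1 ^ 3 * p.2 + p.1 * p.2 ^ 2,
   -p.2 + p.1 ^ 2 * p.2 + p.1 ^ 4)

/-- The box `B_θ = [−√(2θ), √(2θ)] × [−θ, θ]`. -/
noncomputable def B (θ : ℝ) : Set (ℝ × ℝ) :=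
  Icc (-Real.sqrt (2 * θ)) (Real.sqrt (2 * θ)) ×ˢ Icc (-θ) θ

open Filter Topology

theorem HasDerivWithinAt.eventually_le_of_le {f : ℝ → ℝ} {f' t c : ℝ}
    (hf : HasDerivWithinAt f f' (Ici t) t) (hle : f t ≤ c) (hneg : f t = c → f' < 0) :
    ∀ᶠ s in 𝓝[>] t, f s ≤ c := by
  rcases hle.lt_or_eq with hlt | heq
  · exact (hf.continuousWithinAt.eventually_lt continuousWithinAt_const hlt).filter_mono
      (nhdsWithin_mono _ Ioi_subset_Ici_self) |>.mono fun _ ↦ le_of_lt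
  · have hslope : Tendsto (slope f t) (𝓝[>] t) (𝓝 f') :=
      (hasDerivWithinAt_iff_tendsto_slope' self_notMem_Ioi).1 hf.Ioi_of_Ici
    filter_upwards [hslope.eventually (gt_mem_nhds (hneg heq)), self_mem_nhdsWithin]
      with s hs hts
    exact heq ▸ ((slope_neg_iff_of_le (le_of_lt hts)).1 hs).le

theorem IsClosed.mapsTo_Ici_of_eventually_mem {X : Type*} [TopologicalSpace X] {S : Set X}
    (hS : IsClosed S) {z : ℝ → X} {a : ℝ} (hz : ContinuousOn z (Ici a)) (ha : z a ∈ S)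
    (hstep : ∀ t ≥ a, z t ∈ S → ∀ᶠ s in 𝓝[>] t, z s ∈ S) : MapsTo z (Ici a) S := by
  intro T hT
  have hclosed : IsClosed (z ⁻¹' S ∩ Icc a T) := by
    rw [inter_comm]
    exact (hz.mono Icc_subset_Ici_self).preimage_isClosed_of_isClosed isClosed_Icc hS
  exact hclosed.Icc_subset_of_forall_mem_nhdsWithin ha (fun t ht ↦ hstep t ht.2.1 ht.1)
    ⟨hT, le_rfl⟩

theorem forall_nonpos_of_hasDerivAt_of_boundary_neg {ι : Type*} [Finite ι] {h d : ι → ℝ → ℝ}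
    {a : ℝ} (hh : ∀ i, ∀ t ≥ a, HasDerivAt (h i) (d i t) t)
    (hboundary : ∀ i, ∀ t ≥ a, (∀ j, h j t ≤ 0) → h i t = 0 → d i t < 0)
    (ha : ∀ i, h i a ≤ 0) : ∀ t ≥ a, ∀ i, h i t ≤ 0 :=
  isClosed_Iic.mapsTo_Ici_of_eventually_mem (z := fun t i ↦ h i t) (S := Iic 0)
    (continuousOn_pi.2 fun i t ht ↦ (hh i t ht).continuousAt.continuousWithinAt) ha
    (fun t ht hmem ↦ eventually_all.2 fun i ↦
      (hh i t ht).hasDerivWithinAt.eventually_le_of_le (hmem i) (hboundary i t ht hmem))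

theorem HasDerivAt.clm_apply_sq {E : Type*} [NormedAddCommGroup E] [NormedSpace ℝ E]
    (L : E →L[ℝ] ℝ) {z : ℝ → E} {v : E} {t : ℝ} (hz : HasDerivAt z v t) :
    HasDerivAt (fun s ↦ L (z s) ^ 2) (2 * L (z t) * L v) t :=
  ((L.hasFDerivAt.comp_hasDerivAt t hz).fun_pow 2).congr_deriv (by simp)

theorem mem_B_iff {ν : ℝ} (hν : 0 ≤ ν) {p : ℝ × ℝ} :
    p ∈ B ν ↔ p.1 ^ 2 ≤ 2 * ν ∧ p.2 ^ 2 ≤ ν ^ 2 := by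
  rw [B, mem_prod, mem_Icc, mem_Icc, Real.sq_le (by linarith), sq_le_sq, abs_of_nonneg hν,
    abs_le]

theorem fst_mul_F_fst_neg {ν : ℝ} {p : ℝ × ℝ} (hν : 0 < ν) (hν' : ν < 1 / 3)
    (hx : p.1 ^ 2 = 2 * ν) (hy : p.2 ^ 2 ≤ ν ^ 2) : p.1 * (F ν p).1 < 0 := by
  have hy' : p.2 ≤ ν := abs_le_of_sq_le_sq' hy hν.le |>.2
  have hfactor : p.1 * (F ν p).1 = 2 * ν * (-ν + 2 * ν * p.2 + p.2 ^ 2) := by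
    simp only [F]
    linear_combination ((p.2 - 1) * p.1 ^ 2 + p.2 ^ 2 + 2 * ν * p.2 - ν) * hx
  rw [hfactor]
  have : -ν + 2 * ν * p.2 + p.2 ^ 2 < 0 := by nlinarith
  nlinarith

theorem snd_mul_F_snd_neg {ν : ℝ} {p : ℝ × ℝ} (hν : 0 < ν) (hν' : ν < 1 / 6)
    (hx : p.1 ^ 2 ≤ 2 * ν) (hy : p.2 ^ 2 = ν ^ 2) : p.2 * (F ν p).2 < 0 := by
  have hy' : p.2 ≤ ν := abs_le_of_sq_le_sq' hy.le hν.le |>.2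
  have hx4 : p.1 ^ 4 ≤ 4 * ν ^ 2 := by nlinarith [sq_nonneg p.1]
  have hx4y : p.1 ^ 4 * p.2 ≤ p.1 ^ 4 * ν := mul_le_mul_of_nonneg_left hy' (by positivity)
  have : p.2 * (F ν p).2 = -p.2 ^ 2 + p.1 ^ 2 * p.2 ^ 2 + p.1 ^ 4 * p.2 := by simp only [F]; ring
  rw [this, hy]
  nlinarith [mul_le_mul_of_nonneg_right hx4 hν.le,
    mul_neg_of_pos_of_neg (pow_pos hν 2) (by linarith : 6 * ν - 1 < 0)]

theorem mem_B_of_hasDerivAt {ν : ℝ} (hν : 0 < ν) (hν' : ν < 1 / 6) {z : ℝ → ℝ × ℝ}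
    (hz : ∀ t ≥ 0, HasDerivAt z (F ν (z t)) t) (h0 : z 0 ∈ B ν) : ∀ t ≥ 0, z t ∈ B ν := by
  intro t ht
  have key := forall_nonpos_of_hasDerivAt_of_boundary_neg
    (h := ![fun s ↦ (z s).1 ^ 2 - 2 * ν, fun s ↦ (z s).2 ^ 2 - ν ^ 2])
    (d := ![fun s ↦ 2 * (z s).1 * (F ν (z s)).1, fun s ↦ 2 * (z s).2 * (F ν (z s)).2])
    ?_ ?_ ?_ t ht
  · simp only [Fin.forall_fin_two, Matrix.cons_val_zero, Matrix.cons_val_one, sub_nonpos] at key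
    exact (mem_B_iff hν.le).2 key
  · refine Fin.forall_fin_two.2 ⟨fun s hs ↦ ?_, fun s hs ↦ ?_⟩
    · exact ((hz s hs).clm_apply_sq (ContinuousLinearMap.fst ℝ ℝ ℝ)).sub_const _
    · exact ((hz s hs).clm_apply_sq (ContinuousLinearMap.snd ℝ ℝ ℝ)).sub_const _
  · simp only [Fin.forall_fin_two, Matrix.cons_val_zero, Matrix.cons_val_one, sub_nonpos,
      sub_eq_zero]
    refine ⟨fun s _ hB hx ↦ ?_, fun s _ hB hy ↦ ?_⟩
    · linarith [fst_mul_F_fst_neg (p := z s) hν (by linarith) hx hB.2]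
    · linarith [snd_mul_F_snd_neg (p := z s) hν hν' hB.1 hy]
  · simpa only [Fin.forall_fin_two, Matrix.cons_val_zero, Matrix.cons_val_one, sub_nonpos]
      using (mem_B_iff hν.le).1 h0

/-- There exists `ν₊ > 0` such that for every `ν ∈ (0, ν₊]` the set `B_ν` is
forward invariant for the flow of `F_ν`. -/
theorem stmt0 :
    ∃ νp : ℝ, 0 < νp ∧ ∀ ν ∈ Ioc (0 : ℝ) νp, ∀ z : ℝ → ℝ × ℝ,
      (∀ t ∈ Ici (0 : ℝ), HasDerivAt z (F ν (z t)) t) →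
      z 0 ∈ B ν → ∀ t ≥ (0 : ℝ), z t ∈ B ν :=
  ⟨1 / 8, by norm_num, fun _ hν _ hz h0 ↦
    mem_B_of_hasDerivAt hν.1 (by linarith [hν.2]) hz h0⟩
end

section
/- There exists ν₊ > 0 such that for every ν ∈ (0, ν₊] there is a time T > 0 with the property that every solution z of the ODE z' = F_ν(z) defined on [0, ∞) with z(0) ∈ B_{ν₊} satisfies z(t) ∈ B_ν for all t > T. -/
open Set

/-! For `ν ≤ θ ≤ 1/12` the field `F ν` crosses every side of the box `B θ` inwards, and the
coordinates `x²/2` and `±y` that cut the box out decrease there at rate more than `ν²` (the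
smallness of `θ` makes the cubic terms of `F ν` negligible). Hence the shrinking boxes
`B (1/12 - ν² t)` trap every solution starting in `B (1/12)` until the level reaches `ν` at
`t = (1/12 - ν) / ν²`, and from then on `B ν` traps it. -/

open Filter Topology

lemma HasDerivAt.eventually_nhdsGT_lt {g : ℝ → ℝ} {g' x : ℝ} (hg : HasDerivAt g g' x)
    (hg' : g' < 0) : ∀ᶠ t in 𝓝[>] x, g t < g x := by
  filter_upwards [hg.hasDerivWithinAt.limsup_slope_le' (lt_irrefl x) hg', self_mem_nhdsWithin]
    with t hslope hxt
  rw [slope_def_field, div_lt_iff₀ (sub_pos.2 hxt), zero_mul, sub_neg] at hslope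
  exact hslope

theorem forall_le_of_deriv_lt_at_boundary {ι : Type*} [Finite ι] {f f' : ι → ℝ → ℝ}
    {θ θ' : ℝ → ℝ} {a b : ℝ}
    (hf : ∀ i, ∀ t ∈ Icc a b, HasDerivAt (f i) (f' i t) t)
    (hθ : ∀ t ∈ Icc a b, HasDerivAt θ (θ' t) t)
    (ha : ∀ i, f i a ≤ θ a)
    (bound : ∀ t ∈ Ico a b, (∀ j, f j t ≤ θ t) → ∀ i, f i t = θ t → f' i t < θ' t) :
    ∀ t ∈ Icc a b, ∀ i, f i t ≤ θ t := by
  let s := {t | ∀ i, f i t ≤ θ t}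
  have hclosed : IsClosed (s ∩ Icc a b) := by
    rw [inter_comm]
    exact isClosed_Icc.isClosed_le (f := fun t i => f i t) (g := fun t _ => θ t)
      (continuousOn_pi.2 fun i t ht => (hf i t ht).continuousAt.continuousWithinAt)
      (continuousOn_pi.2 fun _ t ht => (hθ t ht).continuousAt.continuousWithinAt)
  have hstep : ∀ t ∈ s ∩ Ico a b, s ∈ 𝓝[>] t := by
    rintro t ⟨hts, htab⟩
    have htab' := Ico_subset_Icc_self htab
    refine eventually_all.2 fun i => ?_
    rcases (hts i).lt_or_eq with hlt | heq
    · exact (((hf i t htab').continuousAt.eventually_lt (hθ t htab').continuousAt hlt).filter_mono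
        nhdsWithin_le_nhds).mono fun _ => le_of_lt
    · filter_upwards [((hf i t htab').sub (hθ t htab')).eventually_nhdsGT_lt
        (sub_neg.2 (bound t htab hts i heq))] with u hu
      simp only [Pi.sub_apply, heq, sub_self, sub_neg] at hu
      exact hu.le
  exact fun t ht => hclosed.Icc_subset_of_forall_mem_nhdsWithin ha hstep ht

noncomputable def boxConstraint : Fin 3 → ℝ × ℝ → ℝ
  | 0, p => p.1 ^ 2 / 2
  | 1, p => p.2
  | 2, p => -p.2

def boxConstraintDeriv : Fin 3 → ℝ × ℝ → ℝ × ℝ → ℝ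
  | 0, p, v => p.1 * v.1
  | 1, _, v => v.2
  | 2, _, v => -v.2

lemma mem_B_iff_s1 {θ : ℝ} (hθ : 0 ≤ θ) {p : ℝ × ℝ} :
    p ∈ B θ ↔ ∀ i, boxConstraint i p ≤ θ := by
  rw [B, mem_prod, mem_Icc, mem_Icc, ← Real.sq_le (by positivity), Fin.forall_fin_succ,
    Fin.forall_fin_succ, Fin.forall_fin_one]
  simp only [boxConstraint, Fin.isValue, Fin.succ_zero_eq_one, Fin.succ_one_eq_two]
  constructor <;> rintro ⟨h₁, h₂, h₃⟩ <;> exact ⟨by linarith, by linarith, by linarith⟩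

lemma HasDerivAt.boxConstraint_comp {z : ℝ → ℝ × ℝ} {v : ℝ × ℝ} {t : ℝ} (hz : HasDerivAt z v t)
    (i : Fin 3) : HasDerivAt (fun τ => boxConstraint i (z τ)) (boxConstraintDeriv i (z t) v) t := by
  have hx : HasDerivAt (fun τ => (z τ).1) v.1 t := hz.fst
  have hy : HasDerivAt (fun τ => (z τ).2) v.2 t := hz.snd
  fin_cases i
  · exact ((hx.fun_pow 2).div_const 2).congr_deriv (by simp only [boxConstraintDeriv]; ring)
  · exact hy
  · exact hy.neg

lemma boxConstraintDeriv_F_lt {ν θ : ℝ} {p : ℝ × ℝ} (hν : 0 < ν) (hνθ : ν ≤ θ)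
    (hθ : θ ≤ 1 / 12) (hp : ∀ j, boxConstraint j p ≤ θ) {i : Fin 3}
    (hi : boxConstraint i p = θ) : boxConstraintDeriv i p (F ν p) < -ν ^ 2 := by
  have hx : p.1 ^ 2 / 2 ≤ θ := hp 0
  have hy : p.2 ≤ θ := hp 1
  have hy' : -p.2 ≤ θ := hp 2
  match i with
  | 0 =>
    have hx2 : p.1 ^ 2 = 2 * θ := by linarith [show p.1 ^ 2 / 2 = θ from hi]
    have hθ₀ : 0 < θ := hν.trans_le hνθ
    have key : p.1 * (p.1 * (ν - p.1 ^ 2) + p.1 ^ 3 * p.2 + p.1 * p.2 ^ 2)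
        = 2 * θ * (ν - 2 * θ) + 4 * θ ^ 2 * p.2 + 2 * θ * p.2 ^ 2 := by
      linear_combination (ν + p.2 ^ 2 - (p.1 ^ 2 + 2 * θ) + p.2 * (p.1 ^ 2 + 2 * θ)) * hx2
    simp only [boxConstraintDeriv, F, key]
    -- at most `2θν - 4θ² + 6θ³ ≤ -3θ²/2`
    nlinarith [mul_nonneg (sq_nonneg θ) (sub_nonneg.2 hy),
      mul_nonneg hθ₀.le (mul_nonneg (sub_nonneg.2 hy) (neg_le_iff_add_nonneg.1 hy')),
      mul_nonneg hθ₀.le (sub_nonneg.2 hνθ), mul_nonneg (sq_nonneg θ) (by linarith : 0 ≤ 1 - 12 * θ),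
      mul_self_le_mul_self hν.le hνθ]
  | 1 =>
    have hy₁ : p.2 = θ := hi
    subst hy₁
    simp only [boxConstraintDeriv, F]
    nlinarith [sq_nonneg p.1, mul_nonneg (sq_nonneg p.1) (by linarith : 0 ≤ 2 * p.2 - p.1 ^ 2)]
  | 2 =>
    have hy₁ : -p.2 = θ := hi
    simp only [boxConstraintDeriv, F]
    nlinarith [sq_nonneg p.1, sq_nonneg (p.1 ^ 2)]

lemma mem_B_of_level_deriv_ge {ν a b : ℝ} {θ θ' : ℝ → ℝ} {z : ℝ → ℝ × ℝ} (hν : 0 < ν)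
    (hz : ∀ t ∈ Icc a b, HasDerivAt z (F ν (z t)) t)
    (hθ : ∀ t ∈ Icc a b, HasDerivAt θ (θ' t) t) (hθ' : ∀ t ∈ Icc a b, -ν ^ 2 ≤ θ' t)
    (hlevel : ∀ t ∈ Icc a b, ν ≤ θ t ∧ θ t ≤ 1 / 12) (ha : z a ∈ B (θ a)) :
    ∀ t ∈ Icc a b, z t ∈ B (θ t) := by
  intro t ht
  have hθ₀ : ∀ s ∈ Icc a b, 0 ≤ θ s := fun s hs => hν.le.trans (hlevel s hs).1
  have hab : a ∈ Icc a b := ⟨le_rfl, ht.1.trans ht.2⟩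
  have hinward : ∀ s ∈ Ico a b, (∀ j, boxConstraint j (z s) ≤ θ s) →
      ∀ i, boxConstraint i (z s) = θ s → boxConstraintDeriv i (z s) (F ν (z s)) < θ' s := by
    intro s hs hall i hi
    have hs' := Ico_subset_Icc_self hs
    exact (boxConstraintDeriv_F_lt hν (hlevel s hs').1 (hlevel s hs').2 hall hi).trans_le
      (hθ' s hs')
  have hbox := forall_le_of_deriv_lt_at_boundary (f := fun i τ => boxConstraint i (z τ))
    (fun i s hs => (hz s hs).boxConstraint_comp i) hθ ((mem_B_iff_s1 (hθ₀ a hab)).1 ha) hinward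
  exact (mem_B_iff_s1 (hθ₀ t ht)).2 (hbox t ht)

/-- There exists `ν₊ > 0` such that for every `ν ∈ (0, ν₊]` there is `T > 0` such that
every solution starting in `B_{ν₊}` lies in `B_ν` for all `t > T`. -/
theorem stmt1 :
    ∃ νp : ℝ, 0 < νp ∧ ∀ ν ∈ Ioc (0 : ℝ) νp, ∃ T : ℝ, 0 < T ∧ ∀ z : ℝ → ℝ × ℝ,
      (∀ t ∈ Ici (0 : ℝ), HasDerivAt z (F ν (z t)) t) →
      z 0 ∈ B νp → ∀ t > T, z t ∈ B ν := by
  refine ⟨1 / 12, by norm_num, fun ν ⟨hν, hν₁₂⟩ => ?_⟩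
  set T₁ := (1 / 12 - ν) / ν ^ 2
  have hT₁ : 0 ≤ T₁ := div_nonneg (by linarith) (sq_nonneg ν)
  have hlevel : 1 / 12 - ν ^ 2 * T₁ = ν := by
    simp only [T₁]
    field_simp
    ring
  refine ⟨T₁ + 1, by linarith, fun z hz hz0 t ht => ?_⟩
  have hz' : ∀ a b, 0 ≤ a → ∀ s ∈ Icc a b, HasDerivAt z (F ν (z s)) s :=
    fun a b ha s hs => hz s (ha.trans hs.1)
  have hzT₁ : z T₁ ∈ B ν := by
    have := mem_B_of_level_deriv_ge (θ := fun s => 1 / 12 - ν ^ 2 * s) hν (hz' 0 T₁ le_rfl)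
      (fun s _ => ((hasDerivAt_id' s).const_mul (ν ^ 2)).const_sub (1 / 12))
      (fun _ _ => by simp)
      (fun s hs => ⟨by linarith [mul_le_mul_of_nonneg_left hs.2 (sq_nonneg ν)],
        by linarith [mul_nonneg (sq_nonneg ν) hs.1]⟩)
      (by simpa using hz0) T₁ ⟨hT₁, le_rfl⟩
    rwa [hlevel] at this
  exact mem_B_of_level_deriv_ge hν (hz' T₁ t hT₁) (fun s _ => hasDerivAt_const s ν)
    (fun _ _ => neg_nonpos.2 (sq_nonneg ν)) (fun _ _ => ⟨le_rfl, hν₁₂⟩) hzT₁ t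
    ⟨by linarith, le_rfl⟩
end

section
/- There exist ν₋ < 0 < ν₊ such that for every ν ∈ [ν₋, 0] and every ξ ∈ (0, ν₊] there is a time T > 0 such that every solution z of z' = F_ν(z) defined on [0, ∞) with z(0) ∈ B_{ν₊} satisfies z(t) ∈ B_ξ for all t > T; consequently every such solution converges to the origin (0, 0) as t → ∞, and (0, 0) is an attracting fixed point of F_ν. -/
open Set

/-!
The squared radius `r = x² + y²` is a Lyapunov function: along the flow
`r' = 2νx² − 2x⁴ − 2y² + 4x⁴y + 4x²y²`, which for `ν ≤ 0` and `r ≤ 1/16` is at most `−r²/2`.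
Comparing `r` with the solution of `u' = −u²/4`, `u(0) = 1/16`, gives `r(t) ≤ 4/(64 + t)` for every
solution starting in `B_{1/64} ⊆ {r ≤ 1/16}`; this bound yields both the uniform entry time
`4/ξ²` into `B_ξ` and the convergence to the origin.
-/

open Filter

def radiusSq (p : ℝ × ℝ) : ℝ := p.1 ^ 2 + p.2 ^ 2

theorem HasDerivAt.radiusSq {z : ℝ → ℝ × ℝ} {v : ℝ × ℝ} {t : ℝ} (hz : HasDerivAt z v t) :
    HasDerivAt (fun s => radiusSq (z s)) (2 * ((z t).1 * v.1 + (z t).2 * v.2)) t := by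
  have hx : HasDerivAt (fun s => (z s).1) v.1 t := hz.fst
  have hy : HasDerivAt (fun s => (z s).2) v.2 t := hz.snd
  refine ((hx.fun_pow 2).fun_add (hy.fun_pow 2)).congr_deriv ?_
  ring

/-- `c / (1 + b c t)` solves `u' = -b u²`; the margin `b < a` makes the comparison strict where
`r` touches it. -/
theorem le_div_of_deriv_le_neg_mul_sq {r r' : ℝ → ℝ} {a b c : ℝ} (hc : 0 < c) (hb : 0 ≤ b)
    (hba : b < a) (hr : ∀ t, 0 ≤ t → HasDerivAt r (r' t) t)
    (hr' : ∀ t, 0 ≤ t → r t ≤ c → r' t ≤ -a * r t ^ 2) (h0 : r 0 ≤ c) :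
    ∀ t, 0 ≤ t → r t ≤ c / (1 + b * c * t) := by
  have hpos : ∀ t, 0 ≤ t → 0 < 1 + b * c * t := fun t ht => by positivity
  have hu : ∀ t, 0 ≤ t → HasDerivAt (fun s => c / (1 + b * c * s))
      (-b * (c / (1 + b * c * t)) ^ 2) t := fun t ht => by
    have hden : HasDerivAt (fun s => 1 + b * c * s) (b * c) t := by
      simpa using ((hasDerivAt_id t).const_mul (b * c)).const_add 1
    refine ((hasDerivAt_const t c).div hden (hpos t ht).ne').congr_deriv ?_
    field_simp
    ring
  intro t ht
  refine image_le_of_deriv_right_lt_deriv_boundary' (a := 0) (b := t)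
    (fun s hs => (hr s hs.1).continuousAt.continuousWithinAt)
    (fun s hs => (hr s hs.1).hasDerivWithinAt) (by simpa using h0)
    (fun s hs => (hu s hs.1).continuousAt.continuousWithinAt)
    (fun s hs => (hu s hs.1).hasDerivWithinAt) (fun s hs hrs => ?_) ⟨ht, le_rfl⟩
  have hus : 0 < c / (1 + b * c * s) := div_pos hc (hpos s hs.1)
  have huc : c / (1 + b * c * s) ≤ c :=
    div_le_self hc.le (le_add_of_nonneg_right (by have := hs.1; positivity))
  calc r' s ≤ -a * r s ^ 2 := hr' s hs.1 (hrs ▸ huc)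
    _ < -b * (c / (1 + b * c * s)) ^ 2 := by rw [hrs]; nlinarith [pow_pos hus 2]

theorem two_mul_inner_F_le {ν : ℝ} {p : ℝ × ℝ} (hν : ν ≤ 0) (hp : radiusSq p ≤ 1 / 16) :
    2 * (p.1 * (F ν p).1 + p.2 * (F ν p).2) ≤ -(1 / 2) * radiusSq p ^ 2 := by
  obtain ⟨x, y⟩ := p
  simp only [radiusSq, F] at hp ⊢
  have hx : x ^ 2 ≤ 1 / 16 := by nlinarith [sq_nonneg y]
  have hy : y ^ 2 ≤ 1 / 16 := by nlinarith [sq_nonneg x]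
  have hy1 : y ≤ 1 / 4 := by nlinarith
  have hy2 : -(1 / 4) ≤ y := by nlinarith
  nlinarith [sq_nonneg (x ^ 2), sq_nonneg y, sq_nonneg (x * y),
    mul_nonneg (sq_nonneg (x ^ 2)) (sub_nonneg.2 hy2),
    mul_nonneg (mul_nonneg (sq_nonneg x) (sq_nonneg x)) (sub_nonneg.2 hy1),
    mul_nonpos_of_nonpos_of_nonneg hν (sq_nonneg x)]

theorem radiusSq_le_of_mem_B {p : ℝ × ℝ} (hp : p ∈ B (1 / 64)) : radiusSq p ≤ 1 / 16 := by
  obtain ⟨hx, hy⟩ := hp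
  have hx2 : p.1 ^ 2 ≤ 2 * (1 / 64) := by
    rw [← Real.sq_sqrt (by norm_num : (0 : ℝ) ≤ 2 * (1 / 64))]
    exact sq_le_sq' hx.1 hx.2
  have hy2 : p.2 ^ 2 ≤ (1 / 64) ^ 2 := sq_le_sq' hy.1 hy.2
  unfold radiusSq
  linarith

theorem mem_B_of_radiusSq_le {ξ : ℝ} {p : ℝ × ℝ} (hξ : 0 < ξ) (hξ2 : ξ ≤ 2)
    (hp : radiusSq p ≤ ξ ^ 2) : p ∈ B ξ := by
  have hx : p.1 ^ 2 ≤ 2 * ξ := by unfold radiusSq at hp; nlinarith [sq_nonneg p.2]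
  have hy : p.2 ^ 2 ≤ ξ ^ 2 := by unfold radiusSq at hp; nlinarith [sq_nonneg p.1]
  exact ⟨abs_le.1 (Real.abs_le_sqrt hx), abs_le_of_sq_le_sq' hy hξ.le⟩

theorem norm_le_sqrt_radiusSq (p : ℝ × ℝ) : ‖p‖ ≤ √(radiusSq p) := by
  refine Real.le_sqrt_of_sq_le ?_
  rw [Prod.norm_def, Real.norm_eq_abs, Real.norm_eq_abs]
  rcases max_choice |p.1| |p.2| with h | h <;> rw [h, sq_abs] <;> unfold radiusSq <;>
    nlinarith [sq_nonneg p.1, sq_nonneg p.2]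

theorem radiusSq_solution_le {ν : ℝ} {z : ℝ → ℝ × ℝ} (hν : ν ≤ 0)
    (hz : ∀ t ∈ Ici (0 : ℝ), HasDerivAt z (F ν (z t)) t) (hz0 : z 0 ∈ B (1 / 64)) :
    ∀ t, 0 ≤ t → radiusSq (z t) ≤ 4 / (64 + t) := by
  intro t ht
  have := le_div_of_deriv_le_neg_mul_sq (a := 1 / 2) (b := 1 / 4) (c := 1 / 16) (by norm_num)
    (by norm_num) (by norm_num) (fun s hs => (hz s hs).radiusSq)
    (fun s _ hs => two_mul_inner_F_le hν hs) (radiusSq_le_of_mem_B hz0) t ht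
  convert this using 1
  field_simp
  ring

/-- There exist `ν₋ < 0 < ν₊` such that for every `ν ∈ [ν₋, 0]` and every `ξ ∈ (0, ν₊]`
there is `T > 0` such that every solution starting in `B_{ν₊}` lies in `B_ξ` for `t > T`;
consequently every such solution converges to the origin, which is a fixed point of `F_ν`. -/
theorem stmt2 :
    ∃ νm νp : ℝ, νm < 0 ∧ 0 < νp ∧ ∀ ν ∈ Icc νm (0 : ℝ),
      (∀ ξ ∈ Ioc (0 : ℝ) νp, ∃ T : ℝ, 0 < T ∧ ∀ z : ℝ → ℝ × ℝ,
        (∀ t ∈ Ici (0 : ℝ), HasDerivAt z (F ν (z t)) t) →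
        z 0 ∈ B νp → ∀ t > T, z t ∈ B ξ) ∧
      (∀ z : ℝ → ℝ × ℝ,
        (∀ t ∈ Ici (0 : ℝ), HasDerivAt z (F ν (z t)) t) →
        z 0 ∈ B νp → Filter.Tendsto z Filter.atTop (nhds ((0 : ℝ), (0 : ℝ)))) ∧
      F ν ((0 : ℝ), (0 : ℝ)) = ((0 : ℝ), (0 : ℝ)) := by
  refine ⟨-1, 1 / 64, by norm_num, by norm_num, fun ν ⟨_, hν⟩ => ⟨?_, ?_, by simp [F]⟩⟩
  · rintro ξ ⟨hξ, hξ64⟩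
    refine ⟨4 / ξ ^ 2, by positivity, fun z hz hz0 t ht => ?_⟩
    have hT : 0 < 4 / ξ ^ 2 := by positivity
    refine mem_B_of_radiusSq_le hξ (by linarith) ?_
    calc radiusSq (z t) ≤ 4 / (64 + t) := radiusSq_solution_le hν hz hz0 t (by linarith)
      _ ≤ 4 / (4 / ξ ^ 2) := by gcongr; linarith
      _ = ξ ^ 2 := by field_simp
  · intro z hz hz0
    refine squeeze_zero_norm' (a := fun t => √(4 / (64 + t))) ?_ ?_
    · filter_upwards [eventually_ge_atTop 0] with t ht
      exact (norm_le_sqrt_radiusSq _).trans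
        (Real.sqrt_le_sqrt (radiusSq_solution_le hν hz hz0 t ht))
    · simpa only [Real.sqrt_zero, id] using (tendsto_const_nhds (x := (4 : ℝ)) |>.div_atTop
        (tendsto_atTop_add_const_left _ 64 tendsto_id)).sqrt
end

section
/- There exist ν₊ > 0 and δ₀ ∈ (0, 1) such that for every ν ∈ (0, ν₊] and every δ ∈ [0, δ₀] there exists λ > 0 such that for all z₁, z₂ ∈ B_ν⁰ and both choices of sign, 2·(F_ν(z₁) − F_ν(z₂))ᵀ Q_{±δ} (z₁ − z₂) ≥ λ·‖z₁ − z₂‖², where Q_{±δ} := diag(1, −1) ± δ·Id. (This is the strong cone condition on B_ν⁰ establishing hyperbolicity of the origin after the bifurcation.) -/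
open Set

noncomputable def B0 (ν : ℝ) : Set (ℝ × ℝ) :=
  Icc (-(Real.sqrt ν / 2)) (Real.sqrt ν / 2) ×ˢ Icc (-ν) ν

private lemma mul_bound {x y a b : ℝ} (hx : -a ≤ x) (hx' : x ≤ a) (hy : -b ≤ y) (hy' : y ≤ b) :
    -(a*b) ≤ x*y ∧ x*y ≤ a*b := by
  constructor <;>
  linarith [mul_nonneg (by linarith : (0:ℝ) ≤ a-x) (by linarith : (0:ℝ) ≤ b-y),
    mul_nonneg (by linarith : (0:ℝ) ≤ a+x) (by linarith : (0:ℝ) ≤ b+y),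
    mul_nonneg (by linarith : (0:ℝ) ≤ a-x) (by linarith : (0:ℝ) ≤ b+y),
    mul_nonneg (by linarith : (0:ℝ) ≤ a+x) (by linarith : (0:ℝ) ≤ b-y)]

private lemma M_bound (Bq D s ε : ℝ) (hs3 : (0:ℝ) ≤ s^3) (hε1 : -(1/2) ≤ ε) (hε2 : ε ≤ 1/2)
    (hBu : Bq ≤ 9/8*s^3) (hBl : -(9/8*s^3) ≤ Bq) (hDu : D ≤ 3/2*s^3) (hDl : -(3/2*s^3) ≤ D) :
    ((1+ε)*Bq + (-1+ε)*D)^2 ≤ 16*s^6 := by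
  have hMu : (1+ε)*Bq + (-1+ε)*D ≤ 4*s^3 := by
    nlinarith [mul_nonneg (by linarith : (0:ℝ) ≤ 1+ε) (by linarith : (0:ℝ) ≤ 9/8*s^3 - Bq),
      mul_nonneg (by linarith : (0:ℝ) ≤ 1-ε) (by linarith : (0:ℝ) ≤ 3/2*s^3 + D),
      mul_nonneg (by linarith : (0:ℝ) ≤ 1/2 - ε) hs3,
      mul_nonneg (by linarith : (0:ℝ) ≤ 1/2 + ε) hs3]
  have hMl : -(4*s^3) ≤ (1+ε)*Bq + (-1+ε)*D := by
    nlinarith [mul_nonneg (by linarith : (0:ℝ) ≤ 1+ε) (by linarith : (0:ℝ) ≤ Bq + 9/8*s^3),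
      mul_nonneg (by linarith : (0:ℝ) ≤ 1-ε) (by linarith : (0:ℝ) ≤ 3/2*s^3 - D),
      mul_nonneg (by linarith : (0:ℝ) ≤ 1/2 - ε) hs3,
      mul_nonneg (by linarith : (0:ℝ) ≤ 1/2 + ε) hs3]
  nlinarith [mul_nonneg (by linarith : (0:ℝ) ≤ 4*s^3 - ((1+ε)*Bq + (-1+ε)*D))
    (by linarith : (0:ℝ) ≤ 4*s^3 + ((1+ε)*Bq + (-1+ε)*D))]

private lemma final_quad (a c M u v s : ℝ) (hs0 : 0 < s) (hs1 : s ≤ 1/10)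
    (ha : s^2/16 ≤ a) (hc : 1/4 ≤ c) (hM : M^2 ≤ 16*s^6) :
    2*(a*u^2 + M*u*v + c*v^2) ≥ s^2/16*(u^2+v^2) := by
  have hss : s^2 ≤ 1/100 := by nlinarith
  have hs4 : s^4 ≤ s^2/100 := by nlinarith [hss, sq_nonneg s]
  have h6 : s^6 ≤ s^2/10000 := by nlinarith [mul_le_mul_of_nonneg_right hs4 (sq_nonneg s), hs4]
  have h64 : 64*M^2 ≤ s^2 := by nlinarith [hM, h6]
  have hT : (s^2/16)*u^2 + 2*M*u*v + (1/4)*v^2 ≥ 0 := by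
    nlinarith [sq_nonneg (s^2*u/2 + 8*M*v), mul_nonneg (by linarith : (0:ℝ) ≤ s^2 - 64*M^2) (sq_nonneg v), mul_pos hs0 hs0]
  linarith [hT, mul_nonneg (by linarith : (0:ℝ) ≤ 2*a - s^2/8) (sq_nonneg u),
            mul_nonneg (by linarith : (0:ℝ) ≤ 2*c - s^2/16 - 1/4) (sq_nonneg v)]

set_option maxHeartbeats 2000000 in
/-- Strong cone condition on `B_ν⁰` for the forms `Q_{±δ} = diag(1, −1) ± δ·Id`:
there exist `ν₊ > 0` and `δ₀ ∈ (0,1)` such that for every `ν ∈ (0, ν₊]` and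
`δ ∈ [0, δ₀]` there is `λ > 0` with
`2 (F_ν z₁ − F_ν z₂)ᵀ Q_{±δ} (z₁ − z₂) ≥ λ ‖z₁ − z₂‖²` for all `z₁, z₂ ∈ B_ν⁰`. -/
theorem stmt5 :
    ∃ νp : ℝ, 0 < νp ∧ ∃ δ₀ ∈ Ioo (0 : ℝ) 1, ∀ ν ∈ Ioc (0 : ℝ) νp, ∀ δ ∈ Icc (0 : ℝ) δ₀,
      ∃ lam : ℝ, 0 < lam ∧ ∀ z₁ ∈ B0 ν, ∀ z₂ ∈ B0 ν, ∀ ε : ℝ, (ε = δ ∨ ε = -δ) →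
        2 * ((1 + ε) * ((F ν z₁).1 - (F ν z₂).1) * (z₁.1 - z₂.1) +
             (-1 + ε) * ((F ν z₁).2 - (F ν z₂).2) * (z₁.2 - z₂.2)) ≥
          lam * ((z₁.1 - z₂.1) ^ 2 + (z₁.2 - z₂.2) ^ 2) := by
  refine ⟨1/100, by norm_num, 1/2, by norm_num, ?_⟩
  rintro ν ⟨hν0, hν1⟩ δ ⟨hδ0, hδ1⟩
  refine ⟨ν/16, by positivity, ?_⟩
  rintro ⟨x₁, y₁⟩ hz₁ ⟨x₂, y₂⟩ hz₂ ε hεor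
  have hε1 : -(1/2) ≤ ε := by rcases hεor with h | h <;> rw [h] <;> linarith
  have hε2 : ε ≤ 1/2 := by rcases hεor with h | h <;> rw [h] <;> linarith
  clear hεor hδ0 hδ1
  have hs0 : 0 < Real.sqrt ν := Real.sqrt_pos.mpr hν0
  set s := Real.sqrt ν with hsdef
  have hs2 : s^2 = ν := Real.sq_sqrt hν0.le
  simp only [B0, Set.mem_prod, Set.mem_Icc] at hz₁ hz₂
  obtain ⟨⟨hx1l, hx1u⟩, hy1l, hy1u⟩ := hz₁
  obtain ⟨⟨hx2l, hx2u⟩, hy2l, hy2u⟩ := hz₂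
  rw [← hs2] at hy1l hy1u hy2l hy2u hν1 ⊢
  simp only [F]
  have hs1 : s ≤ 1/10 := by linarith [sq_nonneg (s - 1/10)]
  have hss : s^2 ≤ 1/100 := hν1
  have hs3 : (0:ℝ) ≤ s^3 := by positivity
  have hs4 : s^4 ≤ s^2/100 := by
    linarith [mul_nonneg (by linarith : (0:ℝ) ≤ 1/100 - s^2) (sq_nonneg s)]
  have hx1sq : x₁^2 ≤ s^2/4 := by
    linarith [mul_nonneg (by linarith : (0:ℝ) ≤ s/2 - x₁) (by linarith : (0:ℝ) ≤ s/2 + x₁)]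
  have hx2sq : x₂^2 ≤ s^2/4 := by
    linarith [mul_nonneg (by linarith : (0:ℝ) ≤ s/2 - x₂) (by linarith : (0:ℝ) ≤ s/2 + x₂)]
  set u := x₁ - x₂ with hu
  set v := y₁ - y₂ with hv
  set A : ℝ := s^2 - (x₁^2 + x₁*x₂ + x₂^2) + (x₁^2 + x₁*x₂ + x₂^2)*y₁ + y₁^2 with hA_def
  set Bq : ℝ := x₂^3 + x₂*y₁ + x₂*y₂ with hB_def
  set D : ℝ := (x₁+x₂)*y₁ + (x₁^2+x₂^2)*(x₁+x₂) with hD_def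
  set M : ℝ := (1+ε)*Bq + (-1+ε)*D with hM_def
  -- bound A from below
  have hA : s^2/8 ≤ A := by
    have hP0 : (0:ℝ) ≤ x₁^2 + x₁*x₂ + x₂^2 := by
      linarith [sq_nonneg (x₁+x₂), sq_nonneg x₁, sq_nonneg x₂]
    have hPu : x₁^2 + x₁*x₂ + x₂^2 ≤ 3/4*s^2 := by
      linarith [sq_nonneg (x₁-x₂), hx1sq, hx2sq]
    have hPy : -(3/4*s^2*s^2) ≤ (x₁^2 + x₁*x₂ + x₂^2)*y₁ := by
      linarith [mul_nonneg hP0 (by linarith : (0:ℝ) ≤ y₁ + s^2),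
        mul_nonneg (by linarith : (0:ℝ) ≤ 3/4*s^2 - (x₁^2 + x₁*x₂ + x₂^2)) (sq_nonneg s)]
    rw [hA_def]
    linarith [sq_nonneg y₁, hPu, hPy, hs4]
  -- bounds on Bq
  have hcube := mul_bound (x := x₂) (y := x₂^2) (a := s/2) (b := s^2/4)
    (by linarith) (by linarith) (by linarith [sq_nonneg x₂]) hx2sq
  have hxy1 := mul_bound (x := x₂) (y := y₁) (a := s/2) (b := s^2)
    (by linarith) (by linarith) (by linarith) (by linarith)
  have hxy2 := mul_bound (x := x₂) (y := y₂) (a := s/2) (b := s^2)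
    (by linarith) (by linarith) (by linarith) (by linarith)
  have hBu : Bq ≤ 9/8*s^3 := by
    rw [hB_def]; nlinarith [hcube.2, hxy1.2, hxy2.2]
  have hBl : -(9/8*s^3) ≤ Bq := by
    rw [hB_def]; nlinarith [hcube.1, hxy1.1, hxy2.1]
  -- bounds on D
  have hwy := mul_bound (x := x₁+x₂) (y := y₁) (a := s) (b := s^2)
    (by linarith) (by linarith) (by linarith) (by linarith)
  have hqw := mul_bound (x := x₁^2+x₂^2) (y := x₁+x₂) (a := s^2/2) (b := s)
    (by nlinarith [sq_nonneg x₁, sq_nonneg x₂] ) (by linarith) (by linarith) (by linarith)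
  have hDu : D ≤ 3/2*s^3 := by
    rw [hD_def]; nlinarith [hwy.2, hqw.2]
  have hDl : -(3/2*s^3) ≤ D := by
    rw [hD_def]; nlinarith [hwy.1, hqw.1]
  -- bounds on M
  have hM2 : M^2 ≤ 16*s^6 := by
    rw [hM_def]; exact M_bound Bq D s ε hs3 hε1 hε2 hBu hBl hDu hDl
  have hA0 : (0:ℝ) ≤ A := by nlinarith [hA, sq_nonneg s]
  have ha : s^2/16 ≤ (1+ε)*A := by
    linarith [mul_nonneg (by linarith : (0:ℝ) ≤ 1/2 + ε) hA0, hA]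
  have hcc : (1:ℝ)/4 ≤ (1-ε)*(1-x₂^2) := by
    linarith [mul_nonneg (by linarith : (0:ℝ) ≤ 1/2 - ε)
      (by linarith [hx2sq, hss] : (0:ℝ) ≤ 1/2 - x₂^2), hx2sq, hss]
  have key := final_quad ((1+ε)*A) ((1-ε)*(1-x₂^2)) M u v s hs0 hs1 ha hcc hM2
  rw [hA_def, hM_def, hB_def, hD_def, hu, hv] at key
  linarith [key]
end

section
/- There exists ν₊ > 0 such that for every ν ∈ (0, ν₊] the first component of F_ν(x, y) is strictly positive for every (x, y) ∈ B_ν^{c+} := [√ν/2, √(ν/2)] × [−ν, ν], and strictly negative for every (x, y) ∈ B_ν^{c−} := [−√(ν/2), −√ν/2] × [−ν, ν]. -/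
open Set

/-- The box `B_ν^{c+} = [√ν/2, √(ν/2)] × [−ν, ν]`. -/
noncomputable def Bcp (ν : ℝ) : Set (ℝ × ℝ) :=
  Icc (Real.sqrt ν / 2) (Real.sqrt (ν / 2)) ×ˢ Icc (-ν) ν

/-- The box `B_ν^{c−} = [−√(ν/2), −√ν/2] × [−ν, ν]`. -/
noncomputable def Bcm (ν : ℝ) : Set (ℝ × ℝ) :=
  Icc (-Real.sqrt (ν / 2)) (-(Real.sqrt ν / 2)) ×ˢ Icc (-ν) ν

lemma inner_pos {ν x y : ℝ} (hν : 0 < ν) (hν2 : ν ≤ 1/2)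
    (hx : x ^ 2 ≤ ν / 2) (hy : |y| ≤ ν) :
    0 < ν - x ^ 2 + x ^ 2 * y + y ^ 2 := by
  have hx0 : 0 ≤ x ^ 2 := sq_nonneg x
  have h1 : x ^ 2 * y ≥ -(ν/2 * ν) := by
    have : |x ^ 2 * y| ≤ ν/2 * ν := by
      rw [abs_mul, abs_of_nonneg hx0]
      exact mul_le_mul hx hy (abs_nonneg y) (by linarith)
    linarith [neg_abs_le (x ^ 2 * y)]
  nlinarith [sq_nonneg y]

/-- There exists `ν₊ > 0` such that for every `ν ∈ (0, ν₊]` the first component of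
`F_ν` is strictly positive on `B_ν^{c+}` and strictly negative on `B_ν^{c−}`. -/
theorem stmt6 :
    ∃ νp : ℝ, 0 < νp ∧ ∀ ν ∈ Ioc (0 : ℝ) νp,
      (∀ p ∈ Bcp ν, 0 < (F ν p).1) ∧ (∀ p ∈ Bcm ν, (F ν p).1 < 0) := by
  refine ⟨1/2, by norm_num, fun ν hν => ?_⟩
  obtain ⟨hν0, hν2⟩ := hν
  have hν2' : ν / 2 ≤ ν := by linarith
  constructor
  · rintro ⟨x, y⟩ ⟨⟨hx1, hx2⟩, hy1, hy2⟩
    have hxpos : 0 < x := lt_of_lt_of_le (by have := Real.sqrt_pos.mpr hν0; linarith) hx1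
    have hxsq : x ^ 2 ≤ ν / 2 := by
      have := Real.sq_sqrt (by linarith : (0:ℝ) ≤ ν / 2)
      nlinarith [Real.sqrt_nonneg (ν/2)]
    have hinner := inner_pos hν0 hν2 hxsq (abs_le.mpr ⟨hy1, hy2⟩)
    have : (F ν (x, y)).1 = x * (ν - x ^ 2 + x ^ 2 * y + y ^ 2) := by
      simp [F]; ring
    rw [this]
    positivity
  · rintro ⟨x, y⟩ ⟨⟨hx1, hx2⟩, hy1, hy2⟩
    have hxneg : x < 0 := lt_of_le_of_lt hx2 (by have := Real.sqrt_pos.mpr hν0; linarith)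
    have hxsq : x ^ 2 ≤ ν / 2 := by
      have := Real.sq_sqrt (by linarith : (0:ℝ) ≤ ν / 2)
      nlinarith [Real.sqrt_nonneg (ν/2)]
    have hinner := inner_pos hν0 hν2 hxsq (abs_le.mpr ⟨hy1, hy2⟩)
    have heq : (F ν (x, y)).1 = x * (ν - x ^ 2 + x ^ 2 * y + y ^ 2) := by
      simp [F]; ring
    rw [heq]
    exact mul_neg_of_neg_of_pos hxneg hinner
end

section
/- There exist ν₊ > 0 and, for each ν ∈ (0, ν₊], a constant l < 0 such that: (i) the sets B_ν⁺ := [√(ν/2), √(2ν)] × [−ν, ν] and B_ν⁻ := [−√(2ν), −√(ν/2)] × [−ν, ν] are forward invariant for the flow of F_ν, and (ii) for every p ∈ B_ν⁺ ∪ B_ν⁻ the symmetric matrix (DF_ν(p) + DF_ν(p)ᵀ)/2 has both eigenvalues at most l, i.e. vᵀ(DF_ν(p) + DF_ν(p)ᵀ)v ≤ 2·l·‖v‖² for all v ∈ ℝ². -/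
open Set Matrix

/-- The Jacobian matrix of `F_ν` at `p`. -/
noncomputable def DF (ν : ℝ) (p : ℝ × ℝ) : Matrix (Fin 2) (Fin 2) ℝ :=
  !![ν - 3 * p.1 ^ 2 + 3 * p.1 ^ 2 * p.2 + p.2 ^ 2, p.1 ^ 3 + 2 * p.1 * p.2;
     2 * p.1 * p.2 + 4 * p.1 ^ 3, -1 + p.1 ^ 2]

/-- The box `B_ν⁺ = [√(ν/2), √(2ν)] × [−ν, ν]`. -/
noncomputable def Bp (ν : ℝ) : Set (ℝ × ℝ) :=
  Icc (Real.sqrt (ν / 2)) (Real.sqrt (2 * ν)) ×ˢ Icc (-ν) ν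

/-- The box `B_ν⁻ = [−√(2ν), −√(ν/2)] × [−ν, ν]`. -/
noncomputable def Bm (ν : ℝ) : Set (ℝ × ℝ) :=
  Icc (-Real.sqrt (2 * ν)) (-Real.sqrt (ν / 2)) ×ˢ Icc (-ν) ν

/-!
A box is forward invariant as soon as the vector field points strictly inwards on each face: at
the first exit time some coordinate would sit on its bound with a derivative of the wrong sign.
Since `x · F₁ = x² (ν − x² + x² y + y²)`, the bracket is `≈ −ν` on the outer faces `x² = 2ν` and
`≈ ν/2` on the inner faces `x² = ν/2`, while `F₂ ≈ ∓ν` on `y = ±ν`. On both boxes the diagonal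
of `DF_ν` is at most `−ν/4` and the symmetrized off-diagonal entry is `O(ν^{3/2})`, so a
Gershgorin-type estimate gives `l = −ν/8` for small `ν`.
-/

open Filter Topology

theorem eventually_le_of_hasDerivAt {f : ℝ → ℝ} {f' t c : ℝ} (hf : HasDerivAt f f' t)
    (hle : f t ≤ c) (hface : f t = c → f' < 0) : ∀ᶠ s in 𝓝[>] t, f s ≤ c := by
  rcases hle.lt_or_eq with hlt | heq
  · exact ((hf.continuousAt.eventually_lt continuousAt_const hlt).filter_mono
      nhdsWithin_le_nhds).mono fun _ => le_of_lt
  · have hslope : Tendsto (slope f t) (𝓝[>] t) (𝓝 f') :=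
      (hasDerivWithinAt_iff_tendsto_slope' (lt_irrefl t)).mp hf.hasDerivWithinAt
    filter_upwards [hslope (Iio_mem_nhds (hface heq)), self_mem_nhdsWithin] with s hs hts
    have hneg : slope f t s < 0 := hs
    have hincr : (s - t) * slope f t s = f s - f t := sub_smul_slope f t s
    nlinarith [mul_neg_of_pos_of_neg (sub_pos.2 (hts : t < s)) hneg]

theorem eventually_ge_of_hasDerivAt {f : ℝ → ℝ} {f' t c : ℝ} (hf : HasDerivAt f f' t)
    (hge : c ≤ f t) (hface : f t = c → 0 < f') : ∀ᶠ s in 𝓝[>] t, c ≤ f s :=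
  (eventually_le_of_hasDerivAt hf.neg (neg_le_neg hge) fun h =>
    neg_neg_of_pos (hface (neg_inj.mp h))).mono fun _ hs => neg_le_neg_iff.mp hs

theorem forward_invariant_of_eventually_mem {E : Type*} [TopologicalSpace E] {K : Set E}
    (hK : IsClosed K) {z : ℝ → E} (hz : ContinuousOn z (Ici 0)) (h0 : z 0 ∈ K)
    (hstep : ∀ t ≥ (0 : ℝ), z t ∈ K → ∀ᶠ s in 𝓝[>] t, z s ∈ K) :
    ∀ t ≥ (0 : ℝ), z t ∈ K := by
  intro t ht
  have hclosed : IsClosed (z ⁻¹' K ∩ Icc 0 t) := by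
    rw [inter_comm]
    exact (hz.mono Icc_subset_Ici_self).preimage_isClosed_of_isClosed isClosed_Icc hK
  exact hclosed.Icc_subset_of_forall_mem_nhdsWithin h0 (fun s hs => hstep s hs.2.1 hs.1)
    ⟨ht, le_rfl⟩

theorem forward_invariant_box {V : ℝ × ℝ → ℝ × ℝ} {a b c d : ℝ}
    (hleft : ∀ p ∈ Icc a b ×ˢ Icc c d, p.1 = a → 0 < (V p).1)
    (hright : ∀ p ∈ Icc a b ×ˢ Icc c d, p.1 = b → (V p).1 < 0)
    (hbot : ∀ p ∈ Icc a b ×ˢ Icc c d, p.2 = c → 0 < (V p).2)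
    (htop : ∀ p ∈ Icc a b ×ˢ Icc c d, p.2 = d → (V p).2 < 0)
    {z : ℝ → ℝ × ℝ} (hz : ∀ t ∈ Ici (0 : ℝ), HasDerivAt z (V (z t)) t)
    (h0 : z 0 ∈ Icc a b ×ˢ Icc c d) : ∀ t ≥ (0 : ℝ), z t ∈ Icc a b ×ˢ Icc c d := by
  refine forward_invariant_of_eventually_mem (isClosed_Icc.prod isClosed_Icc)
    (fun t ht => (hz t ht).continuousAt.continuousWithinAt) h0 fun t ht hzt => ?_
  have hx := (hz t ht).fst
  have hy := (hz t ht).snd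
  filter_upwards [eventually_ge_of_hasDerivAt hx hzt.1.1 (hleft _ hzt),
    eventually_le_of_hasDerivAt hx hzt.1.2 (hright _ hzt),
    eventually_ge_of_hasDerivAt hy hzt.2.1 (hbot _ hzt),
    eventually_le_of_hasDerivAt hy hzt.2.2 (htop _ hzt)] with s h1 h2 h3 h4
  exact ⟨⟨h1, h2⟩, h3, h4⟩

theorem dotProduct_add_transpose_mulVec_le (A : Matrix (Fin 2) (Fin 2) ℝ) {l : ℝ}
    (h0 : A 0 0 + |A 0 1 + A 1 0| / 2 ≤ l) (h1 : A 1 1 + |A 0 1 + A 1 0| / 2 ≤ l)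
    (v : Fin 2 → ℝ) : v ⬝ᵥ ((A + Aᵀ) *ᵥ v) ≤ 2 * l * (v 0 ^ 2 + v 1 ^ 2) := by
  have hexpand : v ⬝ᵥ ((A + Aᵀ) *ᵥ v) =
      2 * (A 0 0 * v 0 ^ 2 + (A 0 1 + A 1 0) * (v 0 * v 1) + A 1 1 * v 1 ^ 2) := by
    simp [dotProduct, mulVec, Fin.sum_univ_two]
    ring
  have hcross : (A 0 1 + A 1 0) * (v 0 * v 1) ≤ |A 0 1 + A 1 0| / 2 * (v 0 ^ 2 + v 1 ^ 2) :=
    calc (A 0 1 + A 1 0) * (v 0 * v 1) ≤ |A 0 1 + A 1 0| * |v 0 * v 1| :=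
          (le_abs_self _).trans (abs_mul _ _).le
      _ ≤ |A 0 1 + A 1 0| * ((v 0 ^ 2 + v 1 ^ 2) / 2) := by
          gcongr
          rw [abs_mul]
          nlinarith [sq_nonneg (|v 0| - |v 1|), sq_abs (v 0), sq_abs (v 1)]
      _ = |A 0 1 + A 1 0| / 2 * (v 0 ^ 2 + v 1 ^ 2) := by ring
  rw [hexpand]
  nlinarith [mul_le_mul_of_nonneg_right h0 (sq_nonneg (v 0)),
    mul_le_mul_of_nonneg_right h1 (sq_nonneg (v 1))]

theorem fst_mul_F_fst (ν : ℝ) (p : ℝ × ℝ) :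
    p.1 * (F ν p).1 = p.1 ^ 2 * (ν - p.1 ^ 2 + p.1 ^ 2 * p.2 + p.2 ^ 2) := by
  simp only [F]
  ring

theorem fst_mul_F_fst_neg_of_sq_eq {ν : ℝ} {p : ℝ × ℝ} (hν0 : 0 < ν) (hν : ν < 1 / 3)
    (hx : p.1 ^ 2 = 2 * ν) (hy : p.2 ∈ Icc (-ν) ν) : p.1 * (F ν p).1 < 0 := by
  rw [fst_mul_F_fst, hx]
  exact mul_neg_of_pos_of_neg (by positivity)
    (by nlinarith [mul_nonneg (sub_nonneg.2 hy.1) (sub_nonneg.2 hy.2),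
      mul_le_mul_of_nonneg_left hy.2 hν0.le])

theorem fst_mul_F_fst_pos_of_sq_eq {ν : ℝ} {p : ℝ × ℝ} (hν0 : 0 < ν) (hν : ν < 8)
    (hx : p.1 ^ 2 = ν / 2) : 0 < p.1 * (F ν p).1 := by
  rw [fst_mul_F_fst, hx]
  exact mul_pos (by positivity) (by nlinarith [sq_nonneg (p.2 + ν / 4)])

theorem F_snd_neg_of_snd_eq {ν : ℝ} {p : ℝ × ℝ} (hν0 : 0 < ν) (hν : ν < 1 / 6)
    (hx : p.1 ^ 2 ≤ 2 * ν) (hy : p.2 = ν) : (F ν p).2 < 0 := by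
  simp only [F, hy]
  nlinarith [sq_nonneg p.1, mul_le_mul hx hx (sq_nonneg _) (by positivity : (0 : ℝ) ≤ 2 * ν)]

theorem F_snd_pos_of_snd_eq_neg {ν : ℝ} {p : ℝ × ℝ} (hν0 : 0 < ν) (hν : ν < 4)
    (hy : p.2 = -ν) : 0 < (F ν p).2 := by
  simp only [F, hy]
  nlinarith [sq_nonneg (p.1 ^ 2 - ν / 2)]

theorem sq_fst_mem_Icc_of_mem_Bp_union_Bm {ν : ℝ} {p : ℝ × ℝ} (hν : 0 ≤ ν)
    (hp : p ∈ Bp ν ∪ Bm ν) : p.1 ^ 2 ∈ Icc (ν / 2) (2 * ν) ∧ p.2 ∈ Icc (-ν) ν := by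
  have habs : √(ν / 2) ≤ √(p.1 ^ 2) ∧ √(p.1 ^ 2) ≤ √(2 * ν) := by
    rw [Real.sqrt_sq_eq_abs]
    rcases hp with ⟨⟨h1, h2⟩, -⟩ | ⟨⟨h1, h2⟩, -⟩
    · rw [abs_of_nonneg ((Real.sqrt_nonneg _).trans h1)]
      exact ⟨h1, h2⟩
    · rw [abs_of_nonpos (h2.trans (neg_nonpos.2 (Real.sqrt_nonneg _)))]
      exact ⟨le_neg_of_le_neg h2, neg_le.1 h1⟩
  refine ⟨⟨(Real.sqrt_le_sqrt_iff (sq_nonneg _)).1 habs.1,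
    (Real.sqrt_le_sqrt_iff (by linarith)).1 habs.2⟩, ?_⟩
  rcases hp with hp | hp <;> exact hp.2

theorem Bp_forward_invariant {ν : ℝ} (hν0 : 0 < ν) (hν : ν < 1 / 6) (z : ℝ → ℝ × ℝ)
    (hz : ∀ t ∈ Ici (0 : ℝ), HasDerivAt z (F ν (z t)) t) (h0 : z 0 ∈ Bp ν) :
    ∀ t ≥ (0 : ℝ), z t ∈ Bp ν := by
  have hx2 : ∀ p ∈ Bp ν, p.1 ^ 2 ≤ 2 * ν := fun p hp =>
    (sq_fst_mem_Icc_of_mem_Bp_union_Bm hν0.le (Or.inl hp)).1.2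
  refine forward_invariant_box (fun p _ h => ?_) (fun p hp h => ?_)
    (fun _ _ h => F_snd_pos_of_snd_eq_neg hν0 (by linarith) h)
    (fun p hp h => F_snd_neg_of_snd_eq hν0 hν (hx2 p hp) h) hz h0
  · refine pos_of_mul_pos_right (fst_mul_F_fst_pos_of_sq_eq hν0 (by linarith) ?_) ?_
    · rw [h, Real.sq_sqrt (by positivity)]
    · exact h ▸ Real.sqrt_nonneg _
  · refine neg_of_mul_neg_right (fst_mul_F_fst_neg_of_sq_eq hν0 (by linarith) ?_ hp.2) ?_
    · rw [h, Real.sq_sqrt (by positivity)]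
    · exact h ▸ Real.sqrt_nonneg _

theorem Bm_forward_invariant {ν : ℝ} (hν0 : 0 < ν) (hν : ν < 1 / 6) (z : ℝ → ℝ × ℝ)
    (hz : ∀ t ∈ Ici (0 : ℝ), HasDerivAt z (F ν (z t)) t) (h0 : z 0 ∈ Bm ν) :
    ∀ t ≥ (0 : ℝ), z t ∈ Bm ν := by
  have hx2 : ∀ p ∈ Bm ν, p.1 ^ 2 ≤ 2 * ν := fun p hp =>
    (sq_fst_mem_Icc_of_mem_Bp_union_Bm hν0.le (Or.inr hp)).1.2
  refine forward_invariant_box (fun p hp h => ?_) (fun p _ h => ?_)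
    (fun _ _ h => F_snd_pos_of_snd_eq_neg hν0 (by linarith) h)
    (fun p hp h => F_snd_neg_of_snd_eq hν0 hν (hx2 p hp) h) hz h0
  · refine pos_of_mul_neg_right (fst_mul_F_fst_neg_of_sq_eq hν0 (by linarith) ?_ hp.2) ?_
    · rw [h, neg_sq, Real.sq_sqrt (by positivity)]
    · exact h ▸ neg_nonpos.2 (Real.sqrt_nonneg _)
  · refine neg_of_mul_pos_right (fst_mul_F_fst_pos_of_sq_eq hν0 (by linarith) ?_) ?_
    · rw [h, neg_sq, Real.sq_sqrt (by positivity)]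
    · exact h ▸ neg_nonpos.2 (Real.sqrt_nonneg _)

theorem dotProduct_DF_add_transpose_mulVec_le {ν : ℝ} {p : ℝ × ℝ} (hν0 : 0 < ν)
    (hν : ν ≤ 1 / 6400) (hx : p.1 ^ 2 ∈ Icc (ν / 2) (2 * ν)) (hy : p.2 ∈ Icc (-ν) ν)
    (v : Fin 2 → ℝ) :
    v ⬝ᵥ ((DF ν p + (DF ν p)ᵀ) *ᵥ v) ≤ 2 * (-(ν / 8)) * (v 0 ^ 2 + v 1 ^ 2) := by
  obtain ⟨hx1, hx2⟩ := hx
  obtain ⟨hy1, hy2⟩ := hy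
  have h00 : DF ν p 0 0 ≤ -(ν / 4) := by
    simp only [DF, of_apply, cons_val', cons_val_zero, empty_val', cons_val_fin_one]
    nlinarith [mul_le_mul_of_nonneg_left hy2 (sq_nonneg p.1),
      mul_nonneg (sub_nonneg.2 hy1) (sub_nonneg.2 hy2)]
  have h11 : DF ν p 1 1 ≤ -(ν / 4) := by
    simp only [DF, of_apply, cons_val', cons_val_one, cons_val_fin_one, empty_val']
    linarith
  have hoff : |DF ν p 0 1 + DF ν p 1 0| ≤ ν / 4 := by
    have hfactor : DF ν p 0 1 + DF ν p 1 0 = p.1 * (5 * p.1 ^ 2 + 4 * p.2) := by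
      simp [DF]
      ring
    have hx56 : |p.1| ≤ 1 / 56 := abs_le_of_sq_le_sq (by linarith) (by norm_num)
    have hbracket : |5 * p.1 ^ 2 + 4 * p.2| ≤ 14 * ν :=
      abs_le.2 ⟨by nlinarith [sq_nonneg p.1], by linarith⟩
    calc |DF ν p 0 1 + DF ν p 1 0| = |p.1| * |5 * p.1 ^ 2 + 4 * p.2| := by
          rw [hfactor, abs_mul]
      _ ≤ 1 / 56 * (14 * ν) := mul_le_mul hx56 hbracket (abs_nonneg _) (by norm_num)
      _ = ν / 4 := by ring
  exact dotProduct_add_transpose_mulVec_le _ (by linarith) (by linarith) v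

/-- There exist `ν₊ > 0` and, for each `ν ∈ (0, ν₊]`, a constant `l < 0` such that
`B_ν⁺` and `B_ν⁻` are forward invariant for the flow of `F_ν`, and on their union
the symmetrized Jacobian satisfies `vᵀ(DF_ν(p) + DF_ν(p)ᵀ)v ≤ 2·l·‖v‖²`. -/
theorem stmt7 :
    ∃ νp : ℝ, 0 < νp ∧ ∀ ν ∈ Ioc (0 : ℝ) νp, ∃ l : ℝ, l < 0 ∧
      (∀ z : ℝ → ℝ × ℝ,
        (∀ t ∈ Ici (0 : ℝ), HasDerivAt z (F ν (z t)) t) →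
        z 0 ∈ Bp ν → ∀ t ≥ (0 : ℝ), z t ∈ Bp ν) ∧
      (∀ z : ℝ → ℝ × ℝ,
        (∀ t ∈ Ici (0 : ℝ), HasDerivAt z (F ν (z t)) t) →
        z 0 ∈ Bm ν → ∀ t ≥ (0 : ℝ), z t ∈ Bm ν) ∧
      (∀ p ∈ Bp ν ∪ Bm ν, ∀ v : Fin 2 → ℝ,
        v ⬝ᵥ ((DF ν p + (DF ν p)ᵀ) *ᵥ v) ≤ 2 * l * (v 0 ^ 2 + v 1 ^ 2)) := by
  refine ⟨1 / 6400, by norm_num, fun ν ⟨hν0, hν⟩ => ⟨-(ν / 8), by linarith,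
    Bp_forward_invariant hν0 (by linarith), Bm_forward_invariant hν0 (by linarith),
    fun p hp v => ?_⟩⟩
  obtain ⟨hx, hy⟩ := sq_fst_mem_Icc_of_mem_Bp_union_Bm hν0.le hp
  exact dotProduct_DF_add_transpose_mulVec_le hν0 hν hx hy v
end

section
/- There exists ν₊ > 0 such that for every ν ∈ (0, ν₊] there exist unique points u₊ ∈ B_ν⁺ and u₋ ∈ B_ν⁻ with F_ν(u₊) = 0 and F_ν(u₋) = 0; moreover every solution z of z' = F_ν(z) defined on [0, ∞) with z(0) ∈ B_ν⁺ converges to u₊ as t → ∞, and every solution starting in B_ν⁻ converges to u₋ as t → ∞. -/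
/-!
For `ν ≤ 1/100` the field is one-sided Lipschitz with negative constant on `B_ν⁺`:
`⟨F p - F q, p - q⟩ ≤ -(ν/8) |p - q|²`. It points strictly inward on every face of the box, so
the box is forward invariant, and along a solution the squared distance to a zero `u` decays like
`exp (-ν t / 4)` by Grönwall. The same inequality makes the zero unique; it exists by the
intermediate value theorem along the nullcline `y = x⁴ / (1 - x²)` of the second component.
The reflection `(x, y) ↦ (-x, y)` commutes with `F ν` and exchanges `B_ν⁺` and `B_ν⁻`.
-/

open Set

open Filter Topology

theorem eventually_nhdsGT_le_of_hasDerivAt {f : ℝ → ℝ} {c a t : ℝ} (hf : HasDerivAt f c t)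
    (ha : a ≤ f t) (hc : f t = a → 0 < c) : ∀ᶠ s in 𝓝[>] t, a ≤ f s := by
  rcases ha.lt_or_eq with hlt | heq
  · exact (hf.continuousAt.eventually (eventually_gt_nhds hlt)).filter_mono nhdsWithin_le_nhds
      |>.mono fun _ => le_of_lt
  · have hslope := (hasDerivAt_iff_tendsto_slope_left_right.1 hf).2.eventually
      (eventually_gt_nhds (hc heq.symm))
    filter_upwards [hslope, self_mem_nhdsWithin] with s hs hts
    exact heq ▸ ((slope_pos_iff_of_le (le_of_lt hts)).1 hs).le

theorem eventually_nhdsGT_mem_Icc_of_hasDerivAt {f : ℝ → ℝ} {c a b t : ℝ}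
    (hf : HasDerivAt f c t) (ht : f t ∈ Icc a b) (ha : f t = a → 0 < c) (hb : f t = b → c < 0) :
    ∀ᶠ s in 𝓝[>] t, f s ∈ Icc a b := by
  have hupper : ∀ᶠ s in 𝓝[>] t, -b ≤ -f s :=
    eventually_nhdsGT_le_of_hasDerivAt hf.neg (neg_le_neg ht.2)
      fun h => neg_pos.2 (hb (neg_inj.1 h))
  filter_upwards [eventually_nhdsGT_le_of_hasDerivAt hf ht.1 ha, hupper] with s h₁ h₂
  exact ⟨h₁, neg_le_neg_iff.1 h₂⟩

theorem eventually_nhdsGT_mem_Icc_prod_Icc_of_hasDerivAt {z : ℝ → ℝ × ℝ} {v : ℝ × ℝ}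
    {a b c d t : ℝ} (hz : HasDerivAt z v t) (ht : z t ∈ Icc a b ×ˢ Icc c d)
    (ha : (z t).1 = a → 0 < v.1) (hb : (z t).1 = b → v.1 < 0)
    (hc : (z t).2 = c → 0 < v.2) (hd : (z t).2 = d → v.2 < 0) :
    ∀ᶠ s in 𝓝[>] t, z s ∈ Icc a b ×ˢ Icc c d :=
  (eventually_nhdsGT_mem_Icc_of_hasDerivAt hz.fst ht.1 ha hb).and
    (eventually_nhdsGT_mem_Icc_of_hasDerivAt hz.snd ht.2 hc hd)

theorem forall_mem_of_eventually_nhdsGT_mem {X : Type*} [TopologicalSpace X] {z : ℝ → X}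
    {K : Set X} (hK : IsClosed K) (hz : ContinuousOn z (Ici 0)) (h0 : z 0 ∈ K)
    (hstep : ∀ t ∈ Ici (0 : ℝ), z t ∈ K → ∀ᶠ s in 𝓝[>] t, z s ∈ K) :
    ∀ t ∈ Ici (0 : ℝ), z t ∈ K := by
  intro b hb
  have hclosed : IsClosed (z ⁻¹' K ∩ Icc 0 b) := by
    rw [inter_comm]
    exact (hz.mono Icc_subset_Ici_self).preimage_isClosed_of_isClosed isClosed_Icc hK
  exact hclosed.Icc_subset_of_forall_mem_nhdsWithin h0 (fun s hs => hstep s hs.2.1 hs.1)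
    ⟨hb, le_rfl⟩

theorem le_mul_exp_of_hasDerivAt_le_neg_mul {r r' : ℝ → ℝ} {k : ℝ}
    (hr : ∀ t ∈ Ici (0 : ℝ), HasDerivAt r (r' t) t) (hle : ∀ t ∈ Ici (0 : ℝ), r' t ≤ -k * r t)
    {t : ℝ} (ht : 0 ≤ t) : r t ≤ r 0 * Real.exp (-k * t) := by
  have := le_gronwallBound_of_liminf_deriv_right_le (f := r) (f' := r') (δ := r 0) (K := -k)
    (ε := 0) (a := 0) (b := t)
    (fun s hs => (hr s hs.1).continuousAt.continuousWithinAt)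
    (fun s hs _ hlt => (hr s hs.1).hasDerivWithinAt.liminf_right_slope_le hlt) le_rfl
    (fun s hs => by simpa using hle s hs.1) t ⟨ht, le_rfl⟩
  simpa [gronwallBound_ε0] using this

theorem tendsto_zero_of_hasDerivAt_le_neg_mul {r r' : ℝ → ℝ} {k : ℝ} (hk : 0 < k)
    (hr : ∀ t ∈ Ici (0 : ℝ), HasDerivAt r (r' t) t) (hle : ∀ t ∈ Ici (0 : ℝ), r' t ≤ -k * r t)
    (hnonneg : ∀ t, 0 ≤ r t) : Tendsto r atTop (𝓝 0) := by
  have hexp : Tendsto (fun t => r 0 * Real.exp (-k * t)) atTop (𝓝 0) := by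
    simpa using (Real.tendsto_exp_atBot.comp
      (tendsto_id.const_mul_atTop_of_neg (neg_neg_of_pos hk))).const_mul (r 0)
  exact squeeze_zero' (Eventually.of_forall hnonneg)
    ((eventually_ge_atTop 0).mono fun t ht => le_mul_exp_of_hasDerivAt_le_neg_mul hr hle ht) hexp

/-- Euclidean inner product on `ℝ × ℝ`, whose library norm is the sup norm. -/
def dot (p q : ℝ × ℝ) : ℝ := p.1 * q.1 + p.2 * q.2

theorem norm_sq_le_dot_self (p : ℝ × ℝ) : ‖p‖ ^ 2 ≤ dot p p := by
  rw [Prod.norm_def, dot]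
  rcases max_cases ‖p.1‖ ‖p.2‖ with ⟨h, -⟩ | ⟨h, -⟩ <;>
    rw [h, Real.norm_eq_abs, sq_abs] <;> nlinarith [sq_nonneg p.1, sq_nonneg p.2]

theorem dot_self_nonneg (p : ℝ × ℝ) : 0 ≤ dot p p :=
  (sq_nonneg _).trans (norm_sq_le_dot_self p)

theorem eq_of_dot_sub_self_nonpos {p q : ℝ × ℝ} (h : dot (p - q) (p - q) ≤ 0) : p = q := by
  have hsq : ‖p - q‖ ^ 2 ≤ 0 := (norm_sq_le_dot_self (p - q)).trans h
  exact sub_eq_zero.1 <| norm_eq_zero.1 <|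
    (pow_eq_zero_iff two_ne_zero).1 (hsq.antisymm (sq_nonneg _))

theorem HasDerivAt.dot_sub_self {z : ℝ → ℝ × ℝ} {v u : ℝ × ℝ} {t : ℝ} (hz : HasDerivAt z v t) :
    HasDerivAt (fun s => dot (z s - u) (z s - u)) (2 * dot v (z t - u)) t := by
  have hx : HasDerivAt (fun s => (z s).1 - u.1) v.1 t := hz.fst.sub_const u.1
  have hy : HasDerivAt (fun s => (z s).2 - u.2) v.2 t := hz.snd.sub_const u.2
  refine (((hx.mul hx).add (hy.mul hy)).congr_deriv ?_ :)
  simp only [dot, Prod.fst_sub, Prod.snd_sub]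
  ring

theorem tendsto_of_dot_sub_self_tendsto_zero {z : ℝ → ℝ × ℝ} {u : ℝ × ℝ} {l : Filter ℝ}
    (h : Tendsto (fun t => dot (z t - u) (z t - u)) l (𝓝 0)) : Tendsto z l (𝓝 u) := by
  rw [tendsto_iff_norm_sub_tendsto_zero]
  have hsqrt := (Real.continuous_sqrt.tendsto 0).comp h
  rw [Real.sqrt_zero] at hsqrt
  refine squeeze_zero (fun t => norm_nonneg _) (fun t => ?_) hsqrt
  rw [Function.comp_apply, ← Real.sqrt_sq (norm_nonneg _)]
  exact Real.sqrt_le_sqrt (norm_sq_le_dot_self _)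

theorem mem_Bp_iff {ν : ℝ} (hν : 0 < ν) {p : ℝ × ℝ} :
    p ∈ Bp ν ↔ 0 < p.1 ∧ ν / 2 ≤ p.1 ^ 2 ∧ p.1 ^ 2 ≤ 2 * ν ∧ -ν ≤ p.2 ∧ p.2 ≤ ν := by
  have hsqrt : 0 < √(ν / 2) := Real.sqrt_pos.2 (by positivity)
  simp only [Bp, mem_prod, mem_Icc]
  constructor
  · rintro ⟨⟨h₁, h₂⟩, h₃⟩
    have hx : 0 < p.1 := hsqrt.trans_le h₁
    exact ⟨hx, (Real.sqrt_le_left hx.le).1 h₁, (Real.le_sqrt hx.le (by positivity)).1 h₂, h₃⟩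
  · rintro ⟨hx, h₁, h₂, h₃⟩
    exact ⟨⟨Real.sqrt_le_left hx.le |>.2 h₁, (Real.le_sqrt hx.le (by positivity)).2 h₂⟩, h₃⟩

theorem quadratic_form_le {ν P Q c s d : ℝ} (hν : 0 < ν) (hν' : ν ≤ 1 / 100)
    (hP : P ≤ -(2 / 5) * ν) (hQ : Q ≤ -(98 / 100)) (hc : c ^ 2 ≤ 424 * ν ^ 3) :
    P * s ^ 2 + Q * d ^ 2 + c * (s * d) ≤ -(ν / 8) * (s ^ 2 + d ^ 2) := by
  have hcross : c * (s * d) ≤ ν / 5 * s ^ 2 + 530 * ν ^ 2 * d ^ 2 := by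
    have h5ν : 0 < 5 * ν := by positivity
    rw [← mul_le_mul_iff_right₀ h5ν]
    nlinarith [sq_nonneg (ν * s - 5 / 2 * c * d), mul_nonneg (sub_nonneg.2 hc) (sq_nonneg d)]
  have hνd : 530 * ν ^ 2 * d ^ 2 ≤ 53 / 10 * ν * d ^ 2 := by
    have := mul_nonneg (mul_nonneg hν.le (sq_nonneg d)) (sub_nonneg.2 hν')
    nlinarith
  nlinarith [mul_le_mul_of_nonneg_right hP (sq_nonneg s),
    mul_le_mul_of_nonneg_right hQ (sq_nonneg d), mul_nonneg hν.le (sq_nonneg s),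
    mul_le_mul_of_nonneg_right hν' (sq_nonneg d)]

theorem dot_F_sub_F_le {ν : ℝ} (hν : 0 < ν) (hν' : ν ≤ 1 / 100) {p q : ℝ × ℝ}
    (hp : p ∈ Bp ν) (hq : q ∈ Bp ν) :
    dot (F ν p - F ν q) (p - q) ≤ -(ν / 8) * dot (p - q) (p - q) := by
  obtain ⟨x₁, y₁⟩ := p
  obtain ⟨x₂, y₂⟩ := q
  obtain ⟨hx₁, hx₁l, hx₁u, hy₁l, hy₁u⟩ := (mem_Bp_iff hν).1 hp
  obtain ⟨hx₂, hx₂l, hx₂u, hy₂l, hy₂u⟩ := (mem_Bp_iff hν).1 hq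
  have hx₁₂l : ν / 2 ≤ x₁ * x₂ := by nlinarith [mul_pos hx₁ hx₂]
  have hx₁₂u : x₁ * x₂ ≤ 2 * ν := by nlinarith [mul_pos hx₁ hx₂]
  set a := x₁ * (y₁ + x₁ ^ 2 + x₁ * x₂)
  set b := x₂ * (2 * x₂ ^ 2 + 2 * y₁ + y₂ + x₁ * x₂)
  -- A quadratic form in `p - q` with `x`-coefficient `≈ -ν`, `y`-coefficient `≈ -1` and cross
  -- coefficient `a + b = O(ν^(3/2))`.
  have hdecomp : dot (F ν (x₁, y₁) - F ν (x₂, y₂)) ((x₁, y₁) - (x₂, y₂)) =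
      (ν - (x₁ ^ 2 + x₁ * x₂ + x₂ ^ 2) * (1 - y₁) + y₁ ^ 2) * (x₁ - x₂) ^ 2
        + (-1 + x₂ ^ 2) * (y₁ - y₂) ^ 2 + (a + b) * ((x₁ - x₂) * (y₁ - y₂)) := by
    simp only [dot, F, Prod.fst_sub, Prod.snd_sub, a, b]
    ring
  have ha : a ^ 2 ≤ 50 * ν ^ 3 := by
    have : (y₁ + x₁ ^ 2 + x₁ * x₂) ^ 2 ≤ 25 * ν ^ 2 := by nlinarith
    calc a ^ 2 = x₁ ^ 2 * (y₁ + x₁ ^ 2 + x₁ * x₂) ^ 2 := by ring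
      _ ≤ 2 * ν * (25 * ν ^ 2) := by gcongr
      _ = 50 * ν ^ 3 := by ring
  have hb : b ^ 2 ≤ 162 * ν ^ 3 := by
    have : (2 * x₂ ^ 2 + 2 * y₁ + y₂ + x₁ * x₂) ^ 2 ≤ 81 * ν ^ 2 := by nlinarith
    calc b ^ 2 = x₂ ^ 2 * (2 * x₂ ^ 2 + 2 * y₁ + y₂ + x₁ * x₂) ^ 2 := by ring
      _ ≤ 2 * ν * (81 * ν ^ 2) := by gcongr
      _ = 162 * ν ^ 3 := by ring
  rw [hdecomp, show dot ((x₁, y₁) - (x₂, y₂)) ((x₁, y₁) - (x₂, y₂)) =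
    (x₁ - x₂) ^ 2 + (y₁ - y₂) ^ 2 by simp only [dot, Prod.fst_sub, Prod.snd_sub]; ring]
  exact quadratic_form_le hν hν' (by nlinarith) (by linarith)
    (by nlinarith [sq_nonneg (a - b)])

theorem solution_mem_Bp {ν : ℝ} (hν : 0 < ν) (hν' : ν ≤ 1 / 100) {z : ℝ → ℝ × ℝ}
    (hz : ∀ t ∈ Ici (0 : ℝ), HasDerivAt z (F ν (z t)) t) (h0 : z 0 ∈ Bp ν) :
    ∀ t ∈ Ici (0 : ℝ), z t ∈ Bp ν := by
  refine forall_mem_of_eventually_nhdsGT_mem (isClosed_Icc.prod isClosed_Icc)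
    (fun t ht => (hz t ht).continuousAt.continuousWithinAt) h0 fun t ht hzt => ?_
  obtain ⟨hx, -, hxu, hyl, hyu⟩ := (mem_Bp_iff hν).1 hzt
  refine eventually_nhdsGT_mem_Icc_prod_Icc_of_hasDerivAt (hz t ht) hzt
    (fun h => ?_) (fun h => ?_) (fun h => ?_) (fun h => ?_) <;> simp only [F]
  · have hx2 : (z t).1 ^ 2 = ν / 2 := by rw [h, Real.sq_sqrt (by positivity)]
    have : 0 < ν / 2 + (z t).1 ^ 2 * (z t).2 + (z t).2 ^ 2 := by
      rw [hx2]; nlinarith [sq_nonneg (z t).2]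
    nlinarith [mul_pos hx this]
  · have hx2 : (z t).1 ^ 2 = 2 * ν := by rw [h, Real.sq_sqrt (by positivity)]
    have : -ν + (z t).1 ^ 2 * (z t).2 + (z t).2 ^ 2 < 0 := by rw [hx2]; nlinarith
    nlinarith [mul_neg_of_pos_of_neg hx this]
  · rw [h]; nlinarith [sq_nonneg ((z t).1 ^ 2)]
  · rw [h]; nlinarith [sq_nonneg ((z t).1 ^ 2)]

theorem eq_of_mem_Bp_of_F_eq_zero {ν : ℝ} (hν : 0 < ν) (hν' : ν ≤ 1 / 100) {p q : ℝ × ℝ}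
    (hp : p ∈ Bp ν) (hq : q ∈ Bp ν) (hFp : F ν p = (0, 0)) (hFq : F ν q = (0, 0)) : p = q := by
  have := dot_F_sub_F_le hν hν' hp hq
  rw [hFp, hFq, sub_self, show dot 0 (p - q) = 0 by simp [dot]] at this
  exact eq_of_dot_sub_self_nonpos (by nlinarith [dot_self_nonneg (p - q)])

/-- Along the nullcline `y = x⁴ / (1 - x²)` of the second component, with `w = x²`, the first
component of `F ν` vanishes iff this polynomial does: it is `(ν - w + w y + y²)(1 - w)²`. -/
def nullclinePoly (ν w : ℝ) : ℝ := (ν - w) * (1 - w) ^ 2 + w ^ 3 * (1 - w) + w ^ 4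

theorem F_eq_zero_of_nullclinePoly_eq_zero {ν w : ℝ} (hw : 0 ≤ w) (hw₁ : w < 1)
    (h : nullclinePoly ν w = 0) : F ν (√w, w ^ 2 / (1 - w)) = (0, 0) := by
  have hsq : √w ^ 2 = w := Real.sq_sqrt hw
  have h1w : 1 - w ≠ 0 := by linarith
  simp only [F, Prod.mk.injEq]
  constructor
  · rw [show ∀ x y : ℝ, x * (ν - x ^ 2) + x ^ 3 * y + x * y ^ 2
      = x * (ν - x ^ 2 + x ^ 2 * y + y ^ 2) by intros; ring, hsq]
    refine mul_eq_zero_of_right _ ?_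
    unfold nullclinePoly at h
    field_simp
    linear_combination h
  · rw [show √w ^ 4 = (√w ^ 2) ^ 2 by ring, hsq]
    field_simp
    ring

theorem exists_mem_Bp_F_eq_zero {ν : ℝ} (hν : 0 < ν) (hν' : ν ≤ 1 / 100) :
    ∃ u ∈ Bp ν, F ν u = (0, 0) := by
  have hcont : ContinuousOn (nullclinePoly ν) (Icc (ν / 2) (2 * ν)) := by
    unfold nullclinePoly; fun_prop
  have hleft : 0 ≤ nullclinePoly ν (ν / 2) := by
    unfold nullclinePoly; nlinarith [pow_pos hν 3, pow_pos hν 4]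
  have hright : nullclinePoly ν (2 * ν) ≤ 0 := by
    unfold nullclinePoly; nlinarith [pow_pos hν 3, pow_pos hν 4]
  obtain ⟨w, ⟨hwl, hwu⟩, hw⟩ := intermediate_value_Icc' (by linarith) hcont ⟨hright, hleft⟩
  have hw₁ : 0 < 1 - w := by linarith
  refine ⟨_, ?_, F_eq_zero_of_nullclinePoly_eq_zero (by linarith) (by linarith) hw⟩
  rw [mem_Bp_iff hν, Real.sq_sqrt (by linarith)]
  refine ⟨Real.sqrt_pos.2 (by linarith), hwl, hwu, ?_, ?_⟩
  · have : 0 ≤ w ^ 2 / (1 - w) := by positivity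
    linarith
  · rw [div_le_iff₀ hw₁]; nlinarith

def IsAttractingZero (ν : ℝ) (K : Set (ℝ × ℝ)) (u : ℝ × ℝ) : Prop :=
  u ∈ K ∧ F ν u = (0, 0) ∧ (∀ v ∈ K, F ν v = (0, 0) → v = u) ∧
    ∀ z : ℝ → ℝ × ℝ, (∀ t ∈ Ici (0 : ℝ), HasDerivAt z (F ν (z t)) t) →
      z 0 ∈ K → Tendsto z atTop (𝓝 u)

theorem exists_isAttractingZero_Bp {ν : ℝ} (hν : 0 < ν) (hν' : ν ≤ 1 / 100) :
    ∃ u, IsAttractingZero ν (Bp ν) u := by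
  obtain ⟨u, hu, hFu⟩ := exists_mem_Bp_F_eq_zero hν hν'
  refine ⟨u, hu, hFu, fun v hv hFv => eq_of_mem_Bp_of_F_eq_zero hν hν' hv hu hFv hFu,
    fun z hz h0 => ?_⟩
  have hmem := solution_mem_Bp hν hν' hz h0
  have hdot : ∀ t ∈ Ici (0 : ℝ), 2 * dot (F ν (z t)) (z t - u) ≤
      -(ν / 4) * dot (z t - u) (z t - u) := fun t ht => by
    have := dot_F_sub_F_le hν hν' (hmem t ht) hu
    rw [hFu, Prod.mk_zero_zero, sub_zero] at this
    linarith
  exact tendsto_of_dot_sub_self_tendsto_zero <| tendsto_zero_of_hasDerivAt_le_neg_mul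
    (by positivity) (fun t ht => (hz t ht).dot_sub_self) hdot fun t => dot_self_nonneg _

def reflectX : ℝ × ℝ →L[ℝ] ℝ × ℝ :=
  (-ContinuousLinearMap.fst ℝ ℝ ℝ).prod (ContinuousLinearMap.snd ℝ ℝ ℝ)

theorem reflectX_apply (p : ℝ × ℝ) : reflectX p = (-p.1, p.2) := rfl

theorem reflectX_reflectX (p : ℝ × ℝ) : reflectX (reflectX p) = p := by
  simp only [reflectX_apply, neg_neg]

theorem F_reflectX (ν : ℝ) (p : ℝ × ℝ) : F ν (reflectX p) = reflectX (F ν p) := by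
  simp only [F, reflectX_apply, Prod.mk.injEq]
  constructor <;> ring

theorem Bm_eq_preimage_reflectX (ν : ℝ) : Bm ν = reflectX ⁻¹' Bp ν := by
  ext p
  simp only [Bm, Bp, mem_preimage, reflectX_apply, mem_prod, mem_Icc]
  constructor <;> rintro ⟨⟨h₁, h₂⟩, h₃⟩ <;> exact ⟨⟨by linarith, by linarith⟩, h₃⟩

theorem IsAttractingZero.preimage_reflectX {ν : ℝ} {K : Set (ℝ × ℝ)} {u : ℝ × ℝ}
    (h : IsAttractingZero ν K u) : IsAttractingZero ν (reflectX ⁻¹' K) (reflectX u) := by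
  obtain ⟨hu, hFu, huniq, hconv⟩ := h
  have hF0 : ∀ v, F ν v = (0, 0) → F ν (reflectX v) = (0, 0) := fun v hv => by
    rw [F_reflectX, hv, reflectX_apply, neg_zero]
  refine ⟨by rwa [mem_preimage, reflectX_reflectX], hF0 u hFu, fun v hv hFv => ?_,
    fun z hz h0 => ?_⟩
  · rw [← huniq _ hv (hF0 v hFv), reflectX_reflectX]
  · have hw : ∀ t ∈ Ici (0 : ℝ), HasDerivAt (reflectX ∘ z) (F ν ((reflectX ∘ z) t)) t :=
      fun t ht => by
        rw [Function.comp_apply, F_reflectX]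
        exact reflectX.hasFDerivAt.comp_hasDerivAt t (hz t ht)
    have := (reflectX.continuous.tendsto u).comp (hconv _ hw h0)
    simpa [Function.comp_def, reflectX_reflectX] using this

/-- There exists `ν₊ > 0` such that for every `ν ∈ (0, ν₊]` there exist unique zeros
`u₊ ∈ B_ν⁺` and `u₋ ∈ B_ν⁻` of `F_ν`, and every solution starting in `B_ν⁺`
(resp. `B_ν⁻`) converges to `u₊` (resp. `u₋`) as `t → ∞`. -/
theorem stmt8 :
    ∃ νp : ℝ, 0 < νp ∧ ∀ ν ∈ Ioc (0 : ℝ) νp,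
      (∃ up ∈ Bp ν, F ν up = (0, 0) ∧
        (∀ u ∈ Bp ν, F ν u = (0, 0) → u = up) ∧
        (∀ z : ℝ → ℝ × ℝ,
          (∀ t ∈ Ici (0 : ℝ), HasDerivAt z (F ν (z t)) t) →
          z 0 ∈ Bp ν → Filter.Tendsto z Filter.atTop (nhds up))) ∧
      (∃ um ∈ Bm ν, F ν um = (0, 0) ∧
        (∀ u ∈ Bm ν, F ν u = (0, 0) → u = um) ∧
        (∀ z : ℝ → ℝ × ℝ,
          (∀ t ∈ Ici (0 : ℝ), HasDerivAt z (F ν (z t)) t) →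
          z 0 ∈ Bm ν → Filter.Tendsto z Filter.atTop (nhds um))) := by
  refine ⟨1 / 100, by norm_num, fun ν hν => ?_⟩
  obtain ⟨u, hu⟩ := exists_isAttractingZero_Bp hν.1 hν.2
  rw [Bm_eq_preimage_reflectX]
  exact ⟨⟨u, hu⟩, ⟨reflectX u, hu.preimage_reflectX⟩⟩
end

section
/- There exists ν₊ > 0 such that for all ν ∈ (0, ν₊] and all θ ∈ [ν, ν₊], writing θ̄ := max(θ/2, ν) and (f, g) := F_ν, the following sign conditions hold for every (x, y) ∈ B_θ: if √(2θ̄) ≤ x ≤ √(2θ) then f(x, y) < 0; if √(2θ̄) ≤ −x ≤ √(2θ) then f(x, y) > 0; if θ̄ ≤ y ≤ θ then g(x, y) < 0; and if θ̄ ≤ −y ≤ θ then g(x, y) > 0. -/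
open Set

set_option maxHeartbeats 2000000 in
/-- Sign conditions of the vector field `F_ν = (f, g)` on the annular region
`B_θ \ B_{θ̄}` with `θ̄ = max(θ/2, ν)`: there exists `ν₊ > 0` such that for all
`ν ∈ (0, ν₊]`, `θ ∈ [ν, ν₊]` and `(x, y) ∈ B_θ`, if `√(2θ̄) ≤ x ≤ √(2θ)` then
`f(x,y) < 0`; if `√(2θ̄) ≤ −x ≤ √(2θ)` then `f(x,y) > 0`; if `θ̄ ≤ y ≤ θ` then
`g(x,y) < 0`; and if `θ̄ ≤ −y ≤ θ` then `g(x,y) > 0`. -/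
theorem stmt10 :
    ∃ νp : ℝ, 0 < νp ∧ ∀ ν ∈ Ioc (0 : ℝ) νp, ∀ θ ∈ Icc ν νp, ∀ p ∈ B θ,
      (Real.sqrt (2 * max (θ / 2) ν) ≤ p.1 → p.1 ≤ Real.sqrt (2 * θ) →
        (F ν p).1 < 0) ∧
      (Real.sqrt (2 * max (θ / 2) ν) ≤ -p.1 → -p.1 ≤ Real.sqrt (2 * θ) →
        0 < (F ν p).1) ∧
      (max (θ / 2) ν ≤ p.2 → p.2 ≤ θ → (F ν p).2 < 0) ∧
      (max (θ / 2) ν ≤ -p.2 → -p.2 ≤ θ → 0 < (F ν p).2) := by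

  refine ⟨1/100, by norm_num, ?_⟩
  rintro ν ⟨hν0, hν1⟩ θ ⟨hθν, hθ1⟩ ⟨x, y⟩ ⟨⟨hx1, hx2⟩, hy1, hy2⟩
  have hθ0 : 0 < θ := lt_of_lt_of_le hν0 hθν
  have hθb0 : 0 < max (θ/2) ν := lt_of_lt_of_le hν0 (le_max_right _ _)
  have hθbθ : θ/2 ≤ max (θ/2) ν := le_max_left _ _
  have hνθb : ν ≤ max (θ/2) ν := le_max_right _ _
  have hθbθ' : max (θ/2) ν ≤ θ := max_le (by linarith) hθν
  have hsq : Real.sqrt (2*θ) ^ 2 = 2*θ := Real.sq_sqrt (by linarith)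
  have hsqb : Real.sqrt (2 * max (θ/2) ν) ^ 2 = 2 * max (θ/2) ν :=
    Real.sq_sqrt (by linarith)
  have hsnn : 0 ≤ Real.sqrt (2*θ) := Real.sqrt_nonneg _
  have hsbpos : 0 < Real.sqrt (2 * max (θ/2) ν) := Real.sqrt_pos.mpr (by linarith)
  have hx2θ : x^2 ≤ 2*θ := by nlinarith
  refine ⟨?_, ?_, ?_, ?_⟩
  · intro h _
    have hx0 : 0 < x := lt_of_lt_of_le hsbpos h
    have hxsq : 2 * max (θ/2) ν ≤ x^2 := by nlinarith
    have hfac : ν - x^2 + x^2*y + y^2 < 0 := by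
      nlinarith [mul_nonneg (sq_nonneg x) (by linarith : (0:ℝ) ≤ θ - y),
        mul_nonneg (by linarith : (0:ℝ) ≤ θ - y) (by linarith : (0:ℝ) ≤ θ + y),
        mul_nonneg (by linarith : (0:ℝ) ≤ x^2 - θ) (by linarith : (0:ℝ) ≤ 1/2 - θ)]
    have hF : (F ν (x, y)).1 = x * (ν - x^2 + x^2*y + y^2) := by
      simp only [F]; ring
    rw [hF]
    exact mul_neg_of_pos_of_neg hx0 hfac
  · intro h _
    have hx0 : x < 0 := by
      have : 0 < -x := lt_of_lt_of_le hsbpos h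
      linarith
    have hxsq : 2 * max (θ/2) ν ≤ x^2 := by nlinarith
    have hfac : ν - x^2 + x^2*y + y^2 < 0 := by
      nlinarith [mul_nonneg (sq_nonneg x) (by linarith : (0:ℝ) ≤ θ - y),
        mul_nonneg (by linarith : (0:ℝ) ≤ θ - y) (by linarith : (0:ℝ) ≤ θ + y),
        mul_nonneg (by linarith : (0:ℝ) ≤ x^2 - θ) (by linarith : (0:ℝ) ≤ 1/2 - θ)]
    have hF : (F ν (x, y)).1 = x * (ν - x^2 + x^2*y + y^2) := by
      simp only [F]; ring
    rw [hF]
    exact mul_pos_of_neg_of_neg hx0 hfac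
  · intro h _
    have hy0 : θ/2 ≤ y := le_trans hθbθ h
    have hG : (F ν (x, y)).2 = -y + x^2*y + x^4 := by simp only [F]
    rw [hG]
    have h1 : x^2*y ≤ 2*θ*y :=
      mul_le_mul_of_nonneg_right (by linarith) (by linarith)
    have h2 : x^4 ≤ 4*θ^2 := by
      nlinarith [mul_nonneg (by linarith : (0:ℝ) ≤ 2*θ - x^2)
        (by positivity : (0:ℝ) ≤ 2*θ + x^2)]
    have h3 : (y - θ/2)*(1 - 2*θ) ≥ 0 :=
      mul_nonneg (by linarith) (by linarith)
    nlinarith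
  · intro h _
    have hy0 : -y ≥ θ/2 := le_trans hθbθ h
    have hG : (F ν (x, y)).2 = -y + x^2*y + x^4 := by simp only [F]
    rw [hG]
    nlinarith [mul_nonneg (by linarith : (0:ℝ) ≤ -y - θ/2) (by linarith : (0:ℝ) ≤ 1 - x^2),
      sq_nonneg (x^2)]
end
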